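/- Let (X,Y) be a source with X binary and Bhattacharyya parameter Z(X|Y) = 2·Σ_y P_Y(y)·√(P_{X|Y}(0|y)·P_{X|Y}(1|y)). If (X₁,Y₁),(X₂,Y₂) are two independent copies of (X,Y), then Z(X₂ | Y₁,Y₂, X₁⊕X₂) = Z(X|Y)², where the conditional Bhattacharyya parameter of X₂ given the pair (Y₁,Y₂,X₁⊕X₂) is defined analogously by summing over all values of the conditioning variables. -/

import Mathlib

/-!
For `w = (y₁, y₂, s)` the two joint probabilities of `u₂ = 0, 1` are `p(s, y₁) p(0, y₂)` and
`p(¬s, y₁) p(1, y₂)`, so their product is `[p(0,y₁) p(1,y₁)] · [p(0,y₂) p(1,y₂)]` whatever `s` is.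
Hence every summand of `Z(X₂ | Y₁,Y₂, X₁ ⊕ X₂)` factors as `f(y₁) f(y₂)` with
`f(y) = √(p(0,y) p(1,y))`, and summing over `y₁`, `y₂` and the two values of `s` gives
`Z(X₂ | Y₁,Y₂, X₁ ⊕ X₂) = 2 · 2 (Σ f)² = (2 Σ f)² = Z(X|Y)²`.
-/

open Real

/-- Conditional source Bhattacharyya parameter
`Z(X|W) = 2 Σ_w √(q(0,w) q(1,w))` for a joint pmf `q x w` with binary `x`. -/
noncomputable def bhat {β : Type*} (q : Bool → β → ℝ) : ℝ :=
  2 * ∑' w : β, Real.sqrt (q false w * q true w)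

lemma summable_sqrt_mul {ι : Type*} {a b : ι → ℝ} (ha : ∀ i, 0 ≤ a i) (hb : ∀ i, 0 ≤ b i)
    (ha' : Summable a) (hb' : Summable b) : Summable fun i => √(a i * b i) := by
  refine .of_nonneg_of_le (fun _ => sqrt_nonneg _) (fun i => ?_) (ha'.add hb')
  exact sqrt_le_iff.mpr ⟨add_nonneg (ha i) (hb i), by nlinarith [ha i, hb i]⟩

lemma hasSum_mul_mul_bool {α : Type*} {g : α → ℝ} (hg0 : ∀ a, 0 ≤ g a) (hg : Summable g) :
    HasSum (fun w : α × α × Bool => g w.1 * g w.2.1) (2 * (∑' a, g a) ^ 2) := by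
  have hpair : HasSum (fun x : α × α => g x.1 * g x.2) ((∑' a, g a) * ∑' a, g a) :=
    hg.hasSum.mul hg.hasSum (hg.mul_of_nonneg hg hg0 hg0)
  have htriple := hpair.mul (hasSum_fintype fun _ : Bool => (1 : ℝ))
    (hpair.summable.mul_of_nonneg .of_finite (fun x => mul_nonneg (hg0 _) (hg0 _))
      fun _ => zero_le_one)
  have hcount : ((∑' a, g a) * ∑' a, g a) * ∑ _s : Bool, (1 : ℝ) = 2 * (∑' a, g a) ^ 2 := by
    simp only [Finset.sum_const, Finset.card_univ, Fintype.card_bool, nsmul_eq_mul]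
    ring
  rw [hcount] at htriple
  simp only [mul_one] at htriple
  exact (Equiv.prodAssoc α α Bool).hasSum_iff.mp htriple

lemma sqrt_xor_mul_eq {α : Type*} (p : Bool → α → ℝ) (hp : ∀ x y, 0 ≤ p x y)
    (s : Bool) (y₁ y₂ : α) :
    √(p (xor s false) y₁ * p false y₂ * (p (xor s true) y₁ * p true y₂)) =
      √(p false y₁ * p true y₁) * √(p false y₂ * p true y₂) := by
  rw [mul_mul_mul_comm, sqrt_mul (mul_nonneg (hp _ _) (hp _ _))]
  cases s <;> simp [mul_comm]

/-- `Z(X₂ | Y₁,Y₂, X₁ ⊕ X₂) = Z(X|Y)²`. -/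
theorem stmt4 (p : Bool → ℕ → ℝ) (hp : ∀ x y, 0 ≤ p x y)
    (hsum : HasSum (fun z : Bool × ℕ => p z.1 z.2) 1) :
    bhat (fun (u₂ : Bool) (w : ℕ × ℕ × Bool) =>
        p (xor w.2.2 u₂) w.1 * p u₂ w.2.1) = (bhat p) ^ 2 := by
  have hsummable (x : Bool) : Summable (p x) :=
    hsum.summable.comp_injective (Prod.mk_right_injective x)
  have hsqrt := summable_sqrt_mul (hp false) (hp true) (hsummable false) (hsummable true)
  have hsum_sqrt := hasSum_mul_mul_bool (fun _ => sqrt_nonneg _) hsqrt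
  simp only [bhat, sqrt_xor_mul_eq p hp, hsum_sqrt.tsum_eq]
  ring
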